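/- Let σ_X, σ_Z > 0, α = σ_X²/(σ_X²+σ_Z²), σ̃² = α σ_Z², λ > 0, N ≥ 2, and let τ*_N be a solution of λ((N−1)/N) E[Φ(((1−α)τ*_N − σ̃ W)/σ_Z)] = α τ*_N, where W ~ N(0,1) and Φ is the Gaussian CDF. Then 1/2 ≤ (σ_X²/(σ_X²+σ_Z²)) · τ*_N / (λ(N−1)/N) ≤ 1/2 + (σ_Z/σ_X²) · λ(N−1)/N. -/

import Mathlib

/-!
Put `L = λ(N-1)/N`, `a = (1-α)τ/σ_Z`, `k = σ̃/σ_Z`, so that the fixed-point equation reads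
`L · E[Φ(a - kW)] = ατ` and the ratio to bound is `E[Φ(a - kW)]`.
Since `Φ(x) + Φ(-x) = 1` and `W` is symmetric, `E[Φ(kW)] = 1/2`; since the standard Gaussian
density is at most `1`, `Φ` is `1`-Lipschitz. Hence for `a ≥ 0`,
`1/2 ≤ E[Φ(a - kW)] ≤ 1/2 + a`. Finally `0 ≤ E[Φ(a - kW)] ≤ 1` gives `0 ≤ ατ ≤ L`, so
`a ≥ 0` and `a = (σ_Z/σ_X²) ατ ≤ (σ_Z/σ_X²) L`.
-/

open MeasureTheory ProbabilityTheory
open scoped NNReal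

/-- The standard Gaussian CDF `Φ`. -/
noncomputable def stdGaussianCDF (x : ℝ) : ℝ :=
  (gaussianReal 0 1 (Set.Iic x)).toReal

lemma gaussianPDFReal_le_inv_sqrt (μ : ℝ) (v : ℝ≥0) (x : ℝ) :
    gaussianPDFReal μ v x ≤ (√(2 * Real.pi * v))⁻¹ := by
  rw [gaussianPDFReal_def]
  refine mul_le_of_le_one_right (by positivity) (Real.exp_le_one_iff.mpr ?_)
  exact div_nonpos_of_nonpos_of_nonneg (neg_nonpos.mpr (sq_nonneg _)) (by positivity)

lemma gaussianReal_zero_one_le_volume : gaussianReal 0 1 ≤ volume := by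
  rw [gaussianReal_of_var_ne_zero 0 one_ne_zero]
  conv_rhs => rw [← withDensity_one (μ := volume)]
  refine withDensity_mono (Filter.Eventually.of_forall fun x => ?_)
  rw [gaussianPDF, Pi.one_apply, ENNReal.ofReal_le_one]
  refine (gaussianPDFReal_le_inv_sqrt 0 1 x).trans (inv_le_one_of_one_le₀ ?_)
  rw [NNReal.coe_one, mul_one, Real.one_le_sqrt]
  linarith [Real.pi_gt_three]

lemma gaussianReal_map_neg_zero (v : ℝ≥0) :
    (gaussianReal 0 v).map (fun x => -x) = gaussianReal 0 v := by
  simpa using gaussianReal_map_neg (μ := 0) (v := v)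

lemma cdf_le_cdf_add_sub {μ : Measure ℝ} [IsProbabilityMeasure μ] (hμ : μ ≤ volume)
    {x y : ℝ} (hxy : x ≤ y) : cdf μ y ≤ cdf μ x + (y - x) := by
  have h : ENNReal.ofReal (cdf μ y - cdf μ x) ≤ ENNReal.ofReal (y - x) := by
    rw [← StieltjesFunction.measure_Ioc, measure_cdf, ← Real.volume_Ioc]
    exact Measure.le_iff'.mp hμ _
  linarith [(ENNReal.ofReal_le_ofReal_iff (sub_nonneg.mpr hxy)).mp h]

lemma stdGaussianCDF_eq_cdf : stdGaussianCDF = cdf (gaussianReal 0 1) := by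
  ext x
  rw [cdf_eq_real]
  rfl

lemma stdGaussianCDF_nonneg (x : ℝ) : 0 ≤ stdGaussianCDF x :=
  stdGaussianCDF_eq_cdf ▸ cdf_nonneg _ x

lemma stdGaussianCDF_le_one (x : ℝ) : stdGaussianCDF x ≤ 1 :=
  stdGaussianCDF_eq_cdf ▸ cdf_le_one _ x

lemma monotone_stdGaussianCDF : Monotone stdGaussianCDF :=
  stdGaussianCDF_eq_cdf ▸ monotone_cdf _

lemma stdGaussianCDF_le_add_sub {x y : ℝ} (hxy : x ≤ y) :
    stdGaussianCDF y ≤ stdGaussianCDF x + (y - x) :=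
  stdGaussianCDF_eq_cdf ▸ cdf_le_cdf_add_sub gaussianReal_zero_one_le_volume hxy

lemma stdGaussianCDF_add_stdGaussianCDF_neg (x : ℝ) :
    stdGaussianCDF x + stdGaussianCDF (-x) = 1 := by
  have := nullSingletonClass_gaussianReal (μ := 0) one_ne_zero
  have hneg : stdGaussianCDF (-x) = (gaussianReal 0 1).real (Set.Ici x) := by
    rw [stdGaussianCDF, ← measureReal_def]
    conv_lhs => rw [← gaussianReal_map_neg_zero]
    rw [map_measureReal_apply measurable_neg measurableSet_Iic]
    congr 1
    ext
    simp
  rw [hneg, ← measureReal_congr Ioi_ae_eq_Ici, ← Set.compl_Iic,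
    probReal_compl_eq_one_sub measurableSet_Iic, stdGaussianCDF, measureReal_def]
  ring

lemma integrable_stdGaussianCDF_comp {μ : Measure ℝ} [IsFiniteMeasure μ] {f : ℝ → ℝ}
    (hf : Measurable f) : Integrable (fun w => stdGaussianCDF (f w)) μ :=
  .of_bound (monotone_stdGaussianCDF.measurable.comp hf).aestronglyMeasurable 1
    (.of_forall fun w => by
      rw [Real.norm_of_nonneg (stdGaussianCDF_nonneg _)]
      exact stdGaussianCDF_le_one _)

lemma integral_stdGaussianCDF_comp_le_one {μ : Measure ℝ} [IsProbabilityMeasure μ] (f : ℝ → ℝ) :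
    ∫ w, stdGaussianCDF (f w) ∂μ ≤ 1 := by
  refine (Real.le_norm_self _).trans ((norm_integral_le_of_norm_le_const (C := 1)
    (.of_forall fun w => ?_)).trans_eq (by simp))
  rw [Real.norm_of_nonneg (stdGaussianCDF_nonneg _)]
  exact stdGaussianCDF_le_one (f w)

lemma integral_stdGaussianCDF_const_mul (k : ℝ) :
    ∫ w, stdGaussianCDF (k * w) ∂gaussianReal 0 1 = 1 / 2 := by
  have hsymm : ∫ w, stdGaussianCDF (-(k * w)) ∂gaussianReal 0 1
      = ∫ w, stdGaussianCDF (k * w) ∂gaussianReal 0 1 := by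
    conv_rhs => rw [← gaussianReal_map_neg_zero]
    rw [integral_map measurable_neg.aemeasurable
      (integrable_stdGaussianCDF_comp (by fun_prop)).aestronglyMeasurable]
    simp only [mul_neg]
  have hsum : ∫ w, stdGaussianCDF (k * w) ∂gaussianReal 0 1
      + ∫ w, stdGaussianCDF (-(k * w)) ∂gaussianReal 0 1 = 1 := by
    rw [← integral_add (integrable_stdGaussianCDF_comp (by fun_prop))
      (integrable_stdGaussianCDF_comp (by fun_prop))]
    simp [stdGaussianCDF_add_stdGaussianCDF_neg]
  linarith

lemma half_le_integral_stdGaussianCDF_sub_mul {a : ℝ} (ha : 0 ≤ a) (k : ℝ) :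
    1 / 2 ≤ ∫ w, stdGaussianCDF (a - k * w) ∂gaussianReal 0 1 := by
  rw [← integral_stdGaussianCDF_const_mul (-k)]
  exact integral_mono (integrable_stdGaussianCDF_comp (by fun_prop))
    (integrable_stdGaussianCDF_comp (by fun_prop))
    fun w => monotone_stdGaussianCDF (by linarith)

lemma integral_stdGaussianCDF_sub_mul_le {a : ℝ} (ha : 0 ≤ a) (k : ℝ) :
    ∫ w, stdGaussianCDF (a - k * w) ∂gaussianReal 0 1 ≤ 1 / 2 + a := by
  have hint : Integrable (fun w => stdGaussianCDF (-k * w)) (gaussianReal 0 1) :=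
    integrable_stdGaussianCDF_comp (by fun_prop)
  calc ∫ w, stdGaussianCDF (a - k * w) ∂gaussianReal 0 1
      ≤ ∫ w, (stdGaussianCDF (-k * w) + a) ∂gaussianReal 0 1 :=
        integral_mono (integrable_stdGaussianCDF_comp (by fun_prop))
          (hint.add (integrable_const a)) fun w => by
            linarith [stdGaussianCDF_le_add_sub (x := -k * w) (y := a - k * w) (by linarith)]
    _ = 1 / 2 + a := by
        rw [integral_add hint (integrable_const a), integral_stdGaussianCDF_const_mul, integral_const]
        simp

/-- If `τ*_N` solves `λ((N-1)/N) E[Φ(((1-α)τ*_N - σ̃W)/σ_Z)] = α τ*_N` with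
`α = σX²/(σX²+σZ²)`, `σ̃² = α σZ²`, `W ~ N(0,1)`, `λ > 0`, `N ≥ 2`, then
`1/2 ≤ α τ*_N/(λ(N-1)/N) ≤ 1/2 + (σ_Z/σX²) λ(N-1)/N`. -/
theorem stmt13 (σX σZ lam : ℝ) (hσX : 0 < σX) (hσZ : 0 < σZ) (hlam : 0 < lam)
    (N : ℕ) (hN : 2 ≤ N) (τs : ℝ)
    (hfix : lam * ((N - 1 : ℝ) / N) *
        ∫ w, stdGaussianCDF
            (((1 - σX ^ 2 / (σX ^ 2 + σZ ^ 2)) * τs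
              - Real.sqrt ((σX ^ 2 / (σX ^ 2 + σZ ^ 2)) * σZ ^ 2) * w) / σZ)
          ∂(gaussianReal 0 1)
      = (σX ^ 2 / (σX ^ 2 + σZ ^ 2)) * τs) :
    1 / 2 ≤ (σX ^ 2 / (σX ^ 2 + σZ ^ 2)) * τs / (lam * ((N - 1 : ℝ) / N)) ∧
    (σX ^ 2 / (σX ^ 2 + σZ ^ 2)) * τs / (lam * ((N - 1 : ℝ) / N))
      ≤ 1 / 2 + (σZ / σX ^ 2) * (lam * ((N - 1 : ℝ) / N)) := by
  set α : ℝ := σX ^ 2 / (σX ^ 2 + σZ ^ 2) with hα_def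
  set L : ℝ := lam * ((N - 1 : ℝ) / N)
  set a : ℝ := (1 - α) * τs / σZ with ha_def
  set k : ℝ := Real.sqrt (α * σZ ^ 2) / σZ with hk_def
  have hα : 0 < α := by positivity
  have hL : 0 < L := by
    have hN' : (2 : ℝ) ≤ N := by exact_mod_cast hN
    exact mul_pos hlam (div_pos (by linarith) (by linarith))
  have h1α : 1 - α = σZ ^ 2 / (σX ^ 2 + σZ ^ 2) := by
    rw [hα_def]
    field_simp
    ring
  have hintegrand (w : ℝ) : ((1 - α) * τs - Real.sqrt (α * σZ ^ 2) * w) / σZ = a - k * w := by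
    rw [ha_def, hk_def]
    ring
  simp only [hintegrand] at hfix
  have hτ : 0 ≤ τs := (mul_nonneg_iff_of_pos_left hα).mp
    (hfix ▸ mul_nonneg hL.le (integral_nonneg fun _ => stdGaussianCDF_nonneg _))
  have ha : 0 ≤ a := by
    rw [ha_def, h1α]
    positivity
  have ha_eq : a = σZ / σX ^ 2 * (α * τs) := by
    rw [ha_def, h1α, hα_def]
    field_simp
  have haL : a ≤ σZ / σX ^ 2 * L := by
    rw [ha_eq, ← hfix, ← mul_assoc]
    exact mul_le_of_le_one_right (by positivity) (integral_stdGaussianCDF_comp_le_one _)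
  rw [← hfix, mul_div_cancel_left₀ _ hL.ne']
  exact ⟨half_le_integral_stdGaussianCDF_sub_mul ha k,
    (integral_stdGaussianCDF_sub_mul_le ha k).trans (by linarith)⟩
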